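/- arXiv:1409.0496 — 3 statements merged into one kernel-verified Lean document; each statement's English description precedes it below -/
import Mathlib

section
/- There exists an acceptable numbering that does not have the Kolmogorov property; that is, there is an acceptable numbering φ and a numbering ψ such that for no constant c does it hold that for every index e there exists j ≤ c·e + c with φ_j = ψ_e. -/
/-- A numbering: a family of partial functions `φ_e : ℕ →. ℕ` such that the
two-variable map `(e, x) ↦ φ_e x` is partial recursive. -/
def PRNumbering (φ : ℕ → ℕ →. ℕ) : Prop := Partrec₂ φ

/-- `φ` is acceptable: every numbering translates into it via a computable function. -/
def Acceptable (φ : ℕ → ℕ →. ℕ) : Prop :=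
  ∀ ψ : ℕ → ℕ →. ℕ, PRNumbering ψ → ∃ f : ℕ → ℕ, Computable f ∧ ∀ e, φ (f e) = ψ e

/-- `φ` has the Kolmogorov property: every numbering translates into it with
linearly bounded (not necessarily computable) translation. -/
def KolmogorovProperty (φ : ℕ → ℕ →. ℕ) : Prop :=
  ∀ ψ : ℕ → ℕ →. ℕ, PRNumbering ψ → ∃ c : ℕ, ∀ e, ∃ j, j ≤ c * e + c ∧ φ j = ψ e

/-- `φ` is computably bounded: every numbering translates into it with a
computable bound on the translated index. -/
def ComputablyBounded (φ : ℕ → ℕ →. ℕ) : Prop :=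
  ∀ ψ : ℕ → ℕ →. ℕ, PRNumbering ψ → ∃ f : ℕ → ℕ, Computable f ∧ ∀ e, ∃ j, j ≤ f e ∧ φ j = ψ e

/-- `φ` is polynomially bounded with degree `p`. -/
def PolyBounded (φ : ℕ → ℕ →. ℕ) (p : ℕ) : Prop :=
  ∀ ψ : ℕ → ℕ →. ℕ, PRNumbering ψ → ∃ c : ℕ, ∀ e, ∃ j, j ≤ c * e ^ p + c ∧ φ j = ψ e

/-- The set of `φ`-minimal indices. -/
def MINset (φ : ℕ → ℕ →. ℕ) : Set ℕ := {e | ∀ j < e, φ j ≠ φ e}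

/-- Minimal indices of functions converging exactly on input 0. -/
def Mset (φ : ℕ → ℕ →. ℕ) : Set ℕ :=
  {e | e ∈ MINset φ ∧ (φ e 0).Dom ∧ ∀ x ≥ 1, ¬ (φ e x).Dom}

/-- `minIndex φ e` is the minimal index computing the same function as `e`. -/
noncomputable def minIndex (φ : ℕ → ℕ →. ℕ) (e : ℕ) : ℕ := sInf {j | φ j = φ e}

/-- A partial recursive `U` is optimal: every partial recursive `V` is simulated
with only linear increase of programs. -/
def OptimalMachine (U : ℕ →. ℕ) : Prop :=
  Nat.Partrec U ∧ ∀ V : ℕ →. ℕ, Nat.Partrec V →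
    ∃ c : ℕ, ∀ p, (V p).Dom → ∃ q, q ≤ c * p + c ∧ U q = V p

/-- Kolmogorov complexity of `x` with respect to `U`: the least binary length of
a `U`-program for `x`. (`Nat.size q` is the binary length of `q`.) -/
noncomputable def Cpx (U : ℕ →. ℕ) (x : ℕ) : ℕ :=
  sInf {n | ∃ q, U q = Part.some x ∧ Nat.size q = n}

/-- Kolmogorov complexity of (the canonical code of) a finite set. -/
noncomputable def CpxFinset (U : ℕ →. ℕ) (A : Finset ℕ) : ℕ :=
  Cpx U (Encodable.encode A)

/-- `A` is `(m,k)`-recursive: a computable labelling of `k`-tuples that is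
correct in at least `m` coordinates on every tuple. -/
def MKRecursive (m k : ℕ) (A : Set ℕ) : Prop :=
  ∃ f : (Fin k → ℕ) → Fin k → Bool, Computable f ∧
    ∀ x : Fin k → ℕ, m ≤ {i : Fin k | (f x i = true ↔ x i ∈ A)}.ncard

/-!
Pad an acceptable numbering so that its `n`-th function sits at index `n²` and every other index
carries the empty function. Translating through `e ↦ e²` keeps it acceptable, but only `c + 1`
indices lie below `(c + 1)²`, too few for the `c + 2` constant functions `0, …, c + 1` that a
linear bound `j ≤ c e + c` would have to place there.
-/

open Finset
open Nat.Partrec (Code)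

theorem Finset.card_le_card_of_forall_exists_eq {ι κ α : Type*} {φ : κ → α} {ψ : ι → α}
    (hψ : Function.Injective ψ) {s : Finset ι} {t : Finset κ}
    (h : ∀ e ∈ s, ∃ j ∈ t, φ j = ψ e) : #s ≤ #t := by
  classical
  calc #s = #(s.image ψ) := (card_image_of_injective s hψ).symm
    _ ≤ #(t.image φ) := card_le_card fun a ha => by
      obtain ⟨e, he, rfl⟩ := mem_image.1 ha
      obtain ⟨j, hj, hφj⟩ := h e he
      exact mem_image.2 ⟨j, hj, hφj⟩
    _ ≤ #t := card_image_le

def codeNumbering : ℕ → ℕ →. ℕ := fun e => (Denumerable.ofNat Code e).eval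

theorem prNumbering_codeNumbering : PRNumbering codeNumbering :=
  Code.eval_part.comp ((Computable.ofNat Code).comp .fst) .snd

theorem acceptable_codeNumbering : Acceptable codeNumbering := by
  intro ψ hψ
  have hψ' : Partrec fun n : ℕ => ψ n.unpair.1 n.unpair.2 :=
    hψ.comp (Computable.fst.comp .unpair) (Computable.snd.comp .unpair)
  obtain ⟨c, hc⟩ := Code.exists_code.1 (Partrec.nat_iff.1 hψ')
  refine ⟨fun e => Encodable.encode (c.curry e),
    (Primrec.encode.comp (Code.primrec₂_curry.comp (.const c) .id)).to_comp, fun e => ?_⟩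
  funext x
  simp only [codeNumbering, Denumerable.ofNat_encode, Code.eval_curry, hc, Nat.unpair_pair]

def squarePadding (φ : ℕ → ℕ →. ℕ) : ℕ → ℕ →. ℕ := fun j x =>
  bif Nat.sqrt j * Nat.sqrt j == j then φ (Nat.sqrt j) x else Part.none

section squarePadding

variable {φ : ℕ → ℕ →. ℕ}

theorem PRNumbering.squarePadding (hφ : PRNumbering φ) : PRNumbering (squarePadding φ) := by
  have hsq : Computable fun p : ℕ × ℕ => Nat.sqrt p.1 * Nat.sqrt p.1 == p.1 :=
    (Primrec.beq.comp
      (Primrec.nat_mul.comp (Primrec.nat_sqrt.comp .fst) (Primrec.nat_sqrt.comp .fst))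
      .fst).to_comp
  exact Partrec.cond hsq (hφ.comp (Primrec.nat_sqrt.to_comp.comp .fst) .snd) Partrec.none

theorem squarePadding_mul_self (n : ℕ) : squarePadding φ (n * n) = φ n := by
  funext x
  simp [squarePadding, Nat.sqrt_eq]

theorem sqrt_mul_self_of_dom_squarePadding {j x : ℕ} (h : (squarePadding φ j x).Dom) :
    Nat.sqrt j * Nat.sqrt j = j := by
  by_contra hj
  simp [squarePadding, beq_false_of_ne hj] at h

theorem Acceptable.squarePadding (hφ : Acceptable φ) : Acceptable (squarePadding φ) := by
  intro ψ hψ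
  obtain ⟨g, hg, hgψ⟩ := hφ ψ hψ
  exact ⟨fun e => g e * g e, Primrec.nat_mul.to_comp.comp hg hg,
    fun e => by rw [squarePadding_mul_self, hgψ]⟩

theorem not_exists_linear_bound_squarePadding_const :
    ¬ ∃ c : ℕ, ∀ e, ∃ j, j ≤ c * e + c ∧ squarePadding φ j = fun _ => Part.some e := by
  rintro ⟨c, hc⟩
  have hsquares : ∀ e ∈ range (c + 2), ∃ j ∈ (range (c + 1)).image (fun n => n * n),
      squarePadding φ j = fun _ => Part.some e := by
    intro e he
    obtain ⟨j, hj, hφj⟩ := hc e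
    have hjc : j < (c + 1) * (c + 1) := by nlinarith [mem_range.1 he]
    refine ⟨j, mem_image.2 ⟨Nat.sqrt j, mem_range.2 (Nat.sqrt_lt.2 hjc), ?_⟩, hφj⟩
    exact sqrt_mul_self_of_dom_squarePadding (φ := φ) (x := 0) (by simp [hφj])
  have hconst : Function.Injective fun e : ℕ => fun _ : ℕ => Part.some e :=
    fun a b h => Part.some_injective (congrFun h 0)
  simpa using (card_le_card_of_forall_exists_eq hconst hsquares).trans card_image_le

end squarePadding

/-- There exists an acceptable numbering without the Kolmogorov property: an
acceptable numbering `φ` and a numbering `ψ` such that no constant `c`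
satisfies: for every `e` there is `j ≤ c*e + c` with `φ_j = ψ_e`. -/
theorem acceptable_not_kolmogorov :
    ∃ φ ψ : ℕ → ℕ →. ℕ, PRNumbering φ ∧ Acceptable φ ∧ PRNumbering ψ ∧
      ¬ ∃ c : ℕ, ∀ e, ∃ j, j ≤ c * e + c ∧ φ j = ψ e :=
  ⟨squarePadding codeNumbering, fun e _ => Part.some e,
    prNumbering_codeNumbering.squarePadding, acceptable_codeNumbering.squarePadding,
    Computable.fst.partrec, not_exists_linear_bound_squarePadding_const⟩
end

section
/- For every computably bounded numbering φ there exists a computable order g (a computable, nondecreasing, unbounded function g : ℕ → ℕ) such that C(x) ≥ g(x) for every x ∈ MIN_φ. -/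
/-!
Pull `φ` back along `U` to the numbering `ψ_q = φ_{U q}`. Computable boundedness gives a
computable `f` and, for `U q = x`, an index `j ≤ f q` with `φ_j = φ_x`; if `x` is minimal then
`x ≤ j ≤ f q`. A shortest program `q` for `x` satisfies `q < 2 ^ C(x)`, so `x ≤ F (C x)` for the
computable monotone majorant `F n = n + ∑_{q < 2^n} f q`, and `g x = min {n | x ≤ F n}` is a
computable order with `g x ≤ C(x)` on minimal indices.
-/

open Finset

theorem Computable.nat_find {α : Type*} [Primcodable α] {p : α → ℕ → Prop}
    [∀ a, DecidablePred (p a)] (hp : Computable₂ fun a n => decide (p a n))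
    (H : ∀ a, ∃ n, p a n) : Computable fun a => Nat.find (H a) :=
  (Partrec.rfind hp.partrec₂).of_eq fun a =>
    Part.eq_some_iff.2 <| Nat.mem_rfind.2
      ⟨by simpa using Nat.find_spec (H a), fun hm => by simpa using Nat.find_min (H a) hm⟩

theorem Computable.sum_range {f : ℕ → ℕ} (hf : Computable f) :
    Computable fun n => ∑ q ∈ range n, f q := by
  have hrec : Computable fun n : ℕ =>
      Nat.rec (motive := fun _ => ℕ) 0 (fun q s => s + f q) n :=
    Computable.nat_rec Computable.id (Computable.const 0)
      ((Primrec.nat_add.to_comp.comp (Computable.snd.comp Computable.snd)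
        (hf.comp (Computable.fst.comp Computable.snd))).to₂)
  refine hrec.of_eq fun n => ?_
  induction n with
  | zero => rfl
  | succ n ih => rw [sum_range_succ, ← ih]

theorem Computable.two_pow : Computable fun n : ℕ => 2 ^ n :=
  (Primrec₂.unpaired'.1 Nat.Primrec.pow).to_comp.comp (Computable.const 2) Computable.id

def IsComputableOrder (g : ℕ → ℕ) : Prop :=
  Computable g ∧ Monotone g ∧ ∀ m, ∃ x, m ≤ g x

theorem exists_isComputableOrder_le_of_le_apply {F : ℕ → ℕ} (hFc : Computable F)
    (hFm : Monotone F) (hFu : ∀ x, ∃ n, x ≤ F n) :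
    ∃ g, IsComputableOrder g ∧ ∀ x n, x ≤ F n → g x ≤ n := by
  refine ⟨fun x => Nat.find (hFu x), ⟨?_, ?_, fun m => ⟨F m + 1, ?_⟩⟩, fun x n h => Nat.find_le h⟩
  · exact Computable.nat_find
      (Primrec.nat_le.decide.to_comp.comp Computable.fst (hFc.comp Computable.snd)).to₂ hFu
  · exact fun a b hab => Nat.find_le (hab.trans (Nat.find_spec (hFu b)))
  · by_contra! h
    have := hFm h.le
    have := Nat.find_spec (hFu (F m + 1))
    omega

theorem exists_isComputableOrder_le_size {f : ℕ → ℕ} (hf : Computable f) :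
    ∃ g, IsComputableOrder g ∧ ∀ q x, x ≤ f q → g x ≤ Nat.size q := by
  set F : ℕ → ℕ := fun n => n + ∑ q ∈ range (2 ^ n), f q
  have hFc : Computable F :=
    Primrec.nat_add.to_comp.comp Computable.id (hf.sum_range.comp Computable.two_pow)
  have hFm : Monotone F := fun a b hab =>
    add_le_add hab <| sum_le_sum_of_subset <| range_mono <| Nat.pow_le_pow_right two_pos hab
  obtain ⟨g, hg, hgF⟩ :=
    exists_isComputableOrder_le_of_le_apply hFc hFm fun x => ⟨x, Nat.le_add_right _ _⟩
  refine ⟨g, hg, fun q x hx => hgF x _ (hx.trans ?_)⟩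
  calc f q ≤ ∑ r ∈ range (2 ^ Nat.size q), f r :=
        single_le_sum (fun _ _ => Nat.zero_le _) (mem_range.2 (Nat.lt_size_self q))
    _ ≤ F (Nat.size q) := Nat.le_add_left _ _

theorem ComputablyBounded.exists_computable_bound_MINset {φ : ℕ → ℕ →. ℕ}
    (hφ : PRNumbering φ) (hcb : ComputablyBounded φ) {U : ℕ →. ℕ} (hU : Partrec U) :
    ∃ f : ℕ → ℕ, Computable f ∧ ∀ q, ∀ x ∈ MINset φ, U q = Part.some x → x ≤ f q := by
  let ψ : ℕ → ℕ →. ℕ := fun q y => (U q).bind fun e => φ e y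
  have hψ : PRNumbering ψ :=
    (hU.comp Computable.fst).bind (hφ.comp Computable.snd (Computable.snd.comp Computable.fst)).to₂
  obtain ⟨f, hfc, hf⟩ := hcb ψ hψ
  refine ⟨f, hfc, fun q x hx hUq => ?_⟩
  obtain ⟨j, hjf, hj⟩ := hf q
  have hψq : ψ q = φ x := funext fun y => by simp only [ψ, hUq, Part.bind_some]
  by_contra! hjx
  exact hx j (by omega) (hj.trans hψq)

theorem OptimalMachine.exists_eq_some {U : ℕ →. ℕ} (hU : OptimalMachine U) (x : ℕ) :
    ∃ q, U q = Part.some x := by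
  obtain ⟨c, hc⟩ := hU.2 Part.some (Nat.Partrec.of_primrec Nat.Primrec.id)
  obtain ⟨q, -, hq⟩ := hc x trivial
  exact ⟨q, hq⟩

theorem le_Cpx_of_forall {U : ℕ →. ℕ} {x n : ℕ} (hx : ∃ q, U q = Part.some x)
    (h : ∀ q, U q = Part.some x → n ≤ Nat.size q) : n ≤ Cpx U x := by
  obtain ⟨q, hq⟩ := hx
  exact le_csInf ⟨_, q, hq, rfl⟩ fun _ ⟨q, hq, hsize⟩ => hsize ▸ h q hq

/-- For every computably bounded numbering there is a computable order `g`
(computable, nondecreasing, unbounded) with `C(x) ≥ g(x)` on minimal indices. -/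
theorem exists_computable_order_le_complexity_on_MIN
    (φ : ℕ → ℕ →. ℕ) (hφ : PRNumbering φ) (hcb : ComputablyBounded φ)
    (U : ℕ →. ℕ) (hU : OptimalMachine U) :
    ∃ g : ℕ → ℕ, Computable g ∧ Monotone g ∧ (∀ m, ∃ x, m ≤ g x) ∧
      ∀ x ∈ MINset φ, g x ≤ Cpx U x := by
  obtain ⟨f, hfc, hf⟩ := hcb.exists_computable_bound_MINset hφ (Partrec.nat_iff.2 hU.1)
  obtain ⟨g, ⟨hgc, hgm, hgu⟩, hg⟩ := exists_isComputableOrder_le_size hfc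
  exact ⟨g, hgc, hgm, hgu, fun x hx =>
    le_Cpx_of_forall (hU.exists_eq_some x) fun q hq => hg q x (hf q x hx hq)⟩
end

section
/- For every computably bounded numbering φ, there is no computable function h : ℕ → ℕ with unbounded range such that h(e) ≤ min_φ(e) for all e. -/
/-!
By Kleene's recursion theorem a program can learn the computable bound `f` on its own
translation into `φ`, and so make itself equivalent to `φ_{k (f n + 1)}`, where `n` is its own
index and `k` is any computable map; then `φ_{k (f n + 1)}` has a `φ`-index `≤ f n`. Taking for
`k` the search `m ↦ μe. m ≤ h e`, the lower bound `h` on `min_φ` would force that `φ`-index to be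
at least `f n + 1`.
-/

open Nat.Partrec (Code)
open Nat.Partrec.Code

theorem Nat.Partrec.Code.exists_eval_zero_eq_some_encode {F : ℕ → ℕ} (hF : Computable F) :
    ∃ c : Code, eval c 0 = Part.some (F (Encodable.encode c)) := by
  have hpart : Partrec₂ fun (c : Code) (_ : ℕ) => Part.some (F (Encodable.encode c)) :=
    (hF.comp (Computable.encode.comp Computable.fst)).partrec
  obtain ⟨c, hc⟩ := fixed_point₂ hpart
  exact ⟨c, congrFun hc 0⟩

def reindexByCode (φ : ℕ → ℕ →. ℕ) (k : ℕ → ℕ) (n : ℕ) : ℕ →. ℕ := fun x =>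
  (eval (Denumerable.ofNat Code n) 0).bind fun m => φ (k m) x

theorem PRNumbering.reindexByCode {φ : ℕ → ℕ →. ℕ} (hφ : PRNumbering φ) {k : ℕ → ℕ}
    (hk : Computable k) : PRNumbering (reindexByCode φ k) := by
  have hrun : Partrec fun p : ℕ × ℕ => eval (Denumerable.ofNat Code p.1) 0 :=
    eval_part.comp ((Computable.ofNat Code).comp Computable.fst) (Computable.const 0)
  have hcont : Partrec₂ fun (p : ℕ × ℕ) (m : ℕ) => φ (k m) p.2 :=
    hφ.comp (hk.comp Computable.snd) (Computable.snd.comp Computable.fst)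
  exact hrun.bind hcont

theorem reindexByCode_encode {φ : ℕ → ℕ →. ℕ} {k : ℕ → ℕ} {c : Code} {m : ℕ}
    (hc : eval c 0 = Part.some m) : reindexByCode φ k (Encodable.encode c) = φ (k m) := by
  funext x
  simp only [reindexByCode, Denumerable.ofNat_encode, hc, Part.bind_some]

theorem minIndex_le {φ : ℕ → ℕ →. ℕ} {e j : ℕ} (h : φ j = φ e) : minIndex φ e ≤ j :=
  Nat.sInf_le h

theorem ComputablyBounded.exists_minIndex_lt {φ : ℕ → ℕ →. ℕ} (hcb : ComputablyBounded φ)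
    (hφ : PRNumbering φ) {k : ℕ → ℕ} (hk : Computable k) :
    ∃ m, minIndex φ (k m) < m := by
  obtain ⟨f, hf, hbound⟩ := hcb _ (hφ.reindexByCode hk)
  obtain ⟨c, hc⟩ := exists_eval_zero_eq_some_encode (Computable.succ.comp hf)
  obtain ⟨j, hj, hφj⟩ := hbound (Encodable.encode c)
  rw [reindexByCode_encode hc] at hφj
  exact ⟨_, (minIndex_le hφj).trans_lt (Nat.lt_succ_of_le hj)⟩

/-- For a computably bounded numbering, no computable function with unbounded
range is a lower bound for `min_φ`. -/
theorem no_unbounded_computable_lower_bound_for_minIndex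
    (φ : ℕ → ℕ →. ℕ) (hφ : PRNumbering φ) (hcb : ComputablyBounded φ) :
    ¬ ∃ h : ℕ → ℕ, Computable h ∧ (∀ m, ∃ e, m ≤ h e) ∧
        ∀ e, h e ≤ minIndex φ e := by
  rintro ⟨h, hh, hunb, hlow⟩
  have hle : ComputablePred fun p : ℕ × ℕ => p.1 ≤ h p.2 :=
    (Primrec.nat_le.decide.to_comp.comp Computable.fst (hh.comp Computable.snd)).computablePred
  obtain ⟨m, hm⟩ := hcb.exists_minIndex_lt hφ (Computable.find hle hunb)
  have hmin : m ≤ minIndex φ (Nat.find (hunb m)) := (Nat.find_spec (hunb m)).trans (hlow _)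
  exact lt_irrefl m (hmin.trans_lt hm)
end
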